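/- On H = L₂(ℝ) with the multiplication group U^t f(x) = e^{itx} f(x), for the subspace X of functions f(x) = |x|^{α/2} Σ c_i χ_{(a_i,b_i)}(x) (disjoint intervals with 0 < a_1) with norm ‖f‖_X = ‖f(x)|x|^{−α/2}‖₂, one has ‖P_{t,s}‖²_{X→H} ≤ (2^α/ρ(α)) (t−s)^{−α} for all t > s, where ρ(α) = inf_{y>0} y^{2−α}/sin²y. -/

import Mathlib

/-!
Write `y = (t - s) x / 2`. The multiplier `m` of `P_{t,s}` has modulus `|sin y| / y`, and
`x = 2 y / (t - s)`, so `|m(x)|² x^α = 2^α (t - s)^{-α} · sin² y / y^{2-α} ≤ 2^α (t - s)^{-α} / ρ(α)`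
for `x > 0`. Since the intervals are disjoint and lie in `(0, ∞)`, `|P_{t,s} f|²` is pointwise
at most `2^α ρ(α)⁻¹ (t - s)^{-α} Σ |cᵢ|² χ_{(aᵢ,bᵢ)}`, whose integral is the right-hand side.
-/

open MeasureTheory Real Set

/-- `ρ(α) = inf_{y>0} y^{2-α}/sin²y` (points with `sin y = 0` excluded). -/
noncomputable def rho (α : ℝ) : ℝ :=
  sInf {r : ℝ | ∃ y > 0, Real.sin y ≠ 0 ∧ r = y ^ (2 - α) / Real.sin y ^ 2}

open Function

lemma sin_sq_le_rpow {α : ℝ} (hα : α ∈ Icc 0 2) {y : ℝ} (hy : 0 < y) :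
    sin y ^ 2 ≤ y ^ (2 - α) := by
  rcases le_or_gt y 1 with hy1 | hy1
  · calc sin y ^ 2 ≤ y ^ (2 : ℝ) := by rw [rpow_two]; exact sin_sq_le_sq
      _ ≤ y ^ (2 - α) := rpow_le_rpow_of_exponent_ge hy hy1 (by linarith [hα.1])
  · calc sin y ^ 2 ≤ 1 := sin_sq_le_one y
      _ ≤ y ^ (2 - α) := one_le_rpow hy1.le (by linarith [hα.2])

lemma one_le_rho {α : ℝ} (hα : α ∈ Icc 0 2) : 1 ≤ rho α := by
  refine le_csInf ⟨_, π / 2, by positivity, by simp, rfl⟩ ?_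
  rintro _ ⟨y, hy, hsin, rfl⟩
  rw [one_le_div (by positivity)]
  exact sin_sq_le_rpow hα hy

lemma rho_mul_sin_sq_le (α : ℝ) {y : ℝ} (hy : 0 < y) :
    rho α * sin y ^ 2 ≤ y ^ (2 - α) := by
  rcases eq_or_ne (sin y) 0 with hsin | hsin
  · simp [hsin, (rpow_pos_of_pos hy _).le]
  have hbdd : BddBelow {r : ℝ | ∃ y > 0, sin y ≠ 0 ∧ r = y ^ (2 - α) / sin y ^ 2} := by
    refine ⟨0, ?_⟩
    rintro _ ⟨z, hz, -, rfl⟩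
    positivity
  rw [← le_div_iff₀ (by positivity)]
  exact csInf_le hbdd ⟨y, hy, hsin, rfl⟩

noncomputable def ergodicAverageMultiplier (s t x : ℝ) : ℂ :=
  (Complex.exp (Complex.I * t * x) - Complex.exp (Complex.I * s * x)) / (Complex.I * x * (t - s))

lemma norm_exp_I_mul_sub_exp_I_mul (u v : ℝ) :
    ‖Complex.exp (Complex.I * u) - Complex.exp (Complex.I * v)‖ = 2 * |sin ((u - v) / 2)| := by
  have hfactor : Complex.exp (Complex.I * u) - Complex.exp (Complex.I * v) =
      Complex.exp (Complex.I * v) * (Complex.exp (Complex.I * ↑(u - v)) - 1) := by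
    rw [mul_sub, ← Complex.exp_add]; push_cast; ring_nf
  rw [hfactor, norm_mul, Complex.norm_exp_I_mul_ofReal, one_mul,
    Complex.norm_exp_I_mul_ofReal_sub_one, norm_mul, Real.norm_two, Real.norm_eq_abs]

-- At `(t - s) * x = 0` both sides are `0`, by the convention `z / 0 = 0`.
lemma norm_ergodicAverageMultiplier (s t x : ℝ) :
    ‖ergodicAverageMultiplier s t x‖ = |sin ((t - s) * x / 2)| / |(t - s) * x / 2| := by
  have hnum : Complex.exp (Complex.I * t * x) - Complex.exp (Complex.I * s * x) =
      Complex.exp (Complex.I * ↑(t * x)) - Complex.exp (Complex.I * ↑(s * x)) := by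
    push_cast; ring_nf
  have hden : Complex.I * x * (t - s) = Complex.I * ↑((t - s) * x) := by push_cast; ring
  rw [ergodicAverageMultiplier, norm_div, hnum, hden, norm_exp_I_mul_sub_exp_I_mul, norm_mul,
    Complex.norm_I, one_mul, Complex.norm_real, Real.norm_eq_abs, ← sub_mul, abs_div,
    abs_two]
  field_simp

lemma norm_sq_ergodicAverageMultiplier_mul_rpow_le {α : ℝ} (hρ : 0 < rho α) {s t : ℝ}
    (hts : s < t) {x : ℝ} (hx : 0 < x) :
    ‖ergodicAverageMultiplier s t x‖ ^ 2 * x ^ α ≤ 2 ^ α / rho α * (t - s) ^ (-α) := by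
  set τ := t - s
  set y := τ * x / 2
  have hτ : 0 < τ := sub_pos.2 hts
  have hy : 0 < y := by positivity
  have hxy : x ^ α = 2 ^ α * τ ^ (-α) * y ^ α := by
    rw [show x = 2 * y * τ⁻¹ by field_simp [y]; ring, mul_rpow (by positivity) (by positivity),
      mul_rpow (by positivity) hy.le, inv_rpow hτ.le, rpow_neg hτ.le]
    ring
  have hsin : sin y ^ 2 / y ^ 2 * y ^ α ≤ (rho α)⁻¹ := by
    have h := rho_mul_sin_sq_le α hy
    rw [rpow_sub hy, rpow_two, le_div_iff₀ (by positivity)] at h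
    calc sin y ^ 2 / y ^ 2 * y ^ α = rho α * sin y ^ 2 * y ^ α / (rho α * y ^ 2) := by
          field_simp
      _ ≤ y ^ 2 / (rho α * y ^ 2) := by gcongr
      _ = (rho α)⁻¹ := by field_simp
  rw [norm_ergodicAverageMultiplier, abs_of_pos hy, div_pow, sq_abs, hxy]
  calc sin y ^ 2 / y ^ 2 * (2 ^ α * τ ^ (-α) * y ^ α)
      = 2 ^ α * τ ^ (-α) * (sin y ^ 2 / y ^ 2 * y ^ α) := by ring
    _ ≤ 2 ^ α * τ ^ (-α) * (rho α)⁻¹ := by gcongr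
    _ = 2 ^ α / rho α * τ ^ (-α) := by ring

lemma norm_sum_mul_indicator_sq {ι X R : Type*} [Fintype ι] [SeminormedRing R] {S : ι → Set X}
    (hS : Pairwise (Disjoint on S)) (c : ι → R) (x : X) :
    ‖∑ i, c i * (S i).indicator (fun _ => 1) x‖ ^ 2 =
      ∑ i, ‖c i‖ ^ 2 * (S i).indicator (fun _ => (1 : ℝ)) x := by
  by_cases hx : ∃ k, x ∈ S k
  · obtain ⟨k, hk⟩ := hx
    have hnot : ∀ i ≠ k, x ∉ S i := fun i hi hxi => Set.disjoint_left.1 (hS hi) hxi hk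
    rw [Fintype.sum_eq_single k fun i hi => by simp [hnot i hi],
      Fintype.sum_eq_single k fun i hi => by simp [hnot i hi]]
    simp [hk]
  · push Not at hx
    simp [hx]

lemma pairwise_disjoint_Ioo_of_le {ι α : Type*} [LinearOrder ι] [Preorder α] {a b : ι → α}
    (hord : ∀ i j, i < j → b i ≤ a j) : Pairwise (Disjoint on fun i => Ioo (a i) (b i)) := by
  have hdisj_of_lt : ∀ i j, i < j → Disjoint (Ioo (a i) (b i)) (Ioo (a j) (b j)) := fun i j hij =>
    Set.disjoint_left.2 fun x hi hj => lt_irrefl x ((hi.2.trans_le (hord i j hij)).trans hj.1)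
  intro i j hij
  rcases hij.lt_or_gt with h | h
  · exact hdisj_of_lt i j h
  · exact (hdisj_of_lt j i h).symm

lemma integrable_mul_indicator_Ioo (w a b : ℝ) :
    Integrable fun x => w * (Ioo a b).indicator (fun _ => (1 : ℝ)) x :=
  ((integrable_indicator_iff measurableSet_Ioo).2
    (integrableOn_const measure_Ioo_lt_top.ne)).const_mul w

lemma integral_sum_mul_indicator_Ioo {ι : Type*} [Fintype ι] (w : ι → ℝ) {a b : ι → ℝ}
    (hab : ∀ i, a i ≤ b i) :
    ∫ x, ∑ i, w i * (Ioo (a i) (b i)).indicator (fun _ => (1 : ℝ)) x = ∑ i, w i * (b i - a i) := by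
  rw [integral_finsetSum _ fun i _ => integrable_mul_indicator_Ioo (w i) (a i) (b i)]
  refine Finset.sum_congr rfl fun i _ => ?_
  rw [integral_const_mul, integral_indicator_const _ measurableSet_Ioo,
    volume_real_Ioo_of_le (hab i), smul_eq_mul, mul_one]

lemma norm_sq_ergodicAverageMultiplier_mul_step_le {α : ℝ} (hρ : 0 < rho α) {s t : ℝ}
    (hts : s < t) {ι : Type*} [Fintype ι] (c : ι → ℂ) {a b : ι → ℝ} (ha : ∀ i, 0 < a i)
    (hdisj : Pairwise (Disjoint on fun i => Ioo (a i) (b i))) (x : ℝ) :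
    ‖ergodicAverageMultiplier s t x *
        (((|x| ^ (α / 2) : ℝ) : ℂ) * ∑ i, c i * (Ioo (a i) (b i)).indicator (fun _ => 1) x)‖ ^ 2 ≤
      2 ^ α / rho α * (t - s) ^ (-α) *
        ∑ i, ‖c i‖ ^ 2 * (Ioo (a i) (b i)).indicator (fun _ => (1 : ℝ)) x := by
  have hweight : ‖((|x| ^ (α / 2) : ℝ) : ℂ)‖ ^ 2 = |x| ^ α := by
    rw [Complex.norm_real, norm_eq_abs, abs_of_nonneg (by positivity), ← rpow_natCast,
      ← rpow_mul (abs_nonneg x)]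
    norm_num
  rw [norm_mul, norm_mul, mul_pow, mul_pow, hweight, norm_sum_mul_indicator_sq hdisj, ← mul_assoc]
  rcases le_or_gt x 0 with hx | hx
  · have hout : ∀ i, x ∉ Ioo (a i) (b i) := fun i hi => lt_asymm (hx.trans_lt (ha i)) hi.1
    simp [hout]
  · rw [abs_of_pos hx]
    exact mul_le_mul_of_nonneg_right (norm_sq_ergodicAverageMultiplier_mul_rpow_le hρ hts hx)
      (Finset.sum_nonneg fun i _ =>
        mul_nonneg (sq_nonneg _) (indicator_nonneg (fun _ _ => zero_le_one) x))

/-- On `H = L₂(ℝ)` with the multiplication group `U^t f(x) = e^{itx} f(x)` (for which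
`P = 0`), the ergodic average is `P_{t,s}f(x) = ((e^{itx} - e^{isx})/(ix(t-s))) f(x)`.
For `f(x) = |x|^{α/2} Σ cᵢ χ_{(aᵢ,bᵢ)}(x)` with `0 < aᵢ < bᵢ ≤ a_{i+1}` one has
`‖f‖²_X = Σ |cᵢ|² (bᵢ - aᵢ)` and `‖P_{t,s} f‖² ≤ (2^α/ρ(α)) (t-s)^{-α} ‖f‖²_X`,
i.e. `‖P_{t,s}‖²_{X→H} ≤ (2^α/ρ(α)) (t-s)^{-α}`. -/
theorem stmt13 (α : ℝ) (hα : α ∈ Set.Icc (0 : ℝ) 2)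
    (n : ℕ) (c : Fin n → ℂ) (a b : Fin n → ℝ)
    (hab : ∀ i, 0 < a i ∧ a i < b i)
    (hord : ∀ i j : Fin n, i < j → b i ≤ a j)
    (s t : ℝ) (hts : s < t) :
    ∫ x : ℝ,
        ‖(Complex.exp (Complex.I * t * x) - Complex.exp (Complex.I * s * x)) /
            (Complex.I * x * (t - s)) *
          (((|x| ^ (α / 2) : ℝ) : ℂ) *
            ∑ i, c i * Set.indicator (Set.Ioo (a i) (b i)) (fun _ => (1 : ℂ)) x)‖ ^ 2 ≤
      2 ^ α / rho α * (t - s) ^ (-α) * ∑ i, ‖c i‖ ^ 2 * (b i - a i) := by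
  have hρ : 0 < rho α := one_pos.trans_le (one_le_rho hα)
  have hpointwise := norm_sq_ergodicAverageMultiplier_mul_step_le hρ hts c
    (fun i => (hab i).1) (pairwise_disjoint_Ioo_of_le hord)
  calc _ ≤ ∫ x, 2 ^ α / rho α * (t - s) ^ (-α) *
          ∑ i, ‖c i‖ ^ 2 * (Ioo (a i) (b i)).indicator (fun _ => (1 : ℝ)) x :=
        integral_mono_of_nonneg (ae_of_all _ fun x => by positivity)
          ((integrable_finsetSum _ fun i _ => integrable_mul_indicator_Ioo _ _ _).const_mul _)
          (ae_of_all _ hpointwise)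
    _ = _ := by rw [integral_const_mul, integral_sum_mul_indicator_Ioo _ fun i => (hab i).2.le]
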